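/- arXiv:0804.1183 — 3 statements merged into one kernel-verified Lean document; each statement's English description precedes it below -/
import Mathlib

section
/- Suppose the ensemble (A, p_A) of functions A : U^n → Ū has the (α, β)-hash property at length n (i.e., for all T, T' ⊆ U^n, Σ_{u∈T, u'∈T'} p_A({A : A u = A u'}) ≤ |T ∩ T'| + |T||T'| α/|Im A| + min{|T|,|T'|} β, where Im A is common to all A ∈ A). Then for any G ⊆ U^n and any u ∉ G, p_A({A : G ∩ C_A(A u) ≠ ∅}) ≤ |G| α / |Im A| + β, where C_A(c) = {u' : A u' = c}. -/
open Finset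

open scoped Classical in
/-- If the ensemble `(𝒜, p_A)` has the `(α, β)`-hash property, then for any
`G ⊆ U^n` and `u ∉ G`,
`p_A({A : G ∩ C_A(Au) ≠ ∅}) ≤ |G| α / |Im 𝒜| + β`. -/
theorem hash_collision_with_set
    {U Ub : Type*} [Fintype U] [Fintype Ub] {n : ℕ}
    (p : ((Fin n → U) → Ub) → ℝ) (hp0 : ∀ A, 0 ≤ p A) (hp1 : ∑ A, p A = 1)
    (ImA : Finset Ub) (hIm : ∀ A, p A ≠ 0 → Finset.univ.image A = ImA)
    (α β : ℝ) (hα : 0 ≤ α) (hβ : 0 ≤ β)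
    (hhash : ∀ T T' : Finset (Fin n → U),
      ∑ u ∈ T, ∑ u' ∈ T', (∑ A, if A u = A u' then p A else 0)
        ≤ ((T ∩ T').card : ℝ)
          + (T.card : ℝ) * (T'.card : ℝ) * α / (ImA.card : ℝ)
          + (min T.card T'.card : ℕ) * β)
    (G : Finset (Fin n → U)) (u : Fin n → U) (hu : u ∉ G) :
    (∑ A, if (∃ u' ∈ G, A u' = A u) then p A else 0)
      ≤ (G.card : ℝ) * α / (ImA.card : ℝ) + β := by
  have key := hhash G {u}
  have hinter : (G ∩ {u}).card = 0 := by
    simp [Finset.inter_singleton_of_notMem hu]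
  have hmin : ((min G.card ({u} : Finset (Fin n → U)).card : ℕ) : ℝ) * β ≤ β := by
    have : (min G.card ({u} : Finset (Fin n → U)).card : ℕ) ≤ 1 := by
      simp [min_le_iff]
    calc ((min G.card ({u} : Finset (Fin n → U)).card : ℕ) : ℝ) * β
        ≤ 1 * β := by
          apply mul_le_mul_of_nonneg_right _ hβ
          exact_mod_cast this
      _ = β := one_mul β
  have hstep : (∑ A, if (∃ u' ∈ G, A u' = A u) then p A else 0)
      ≤ ∑ u' ∈ G, ∑ A, (if A u' = A u then p A else 0 : ℝ) := by
    rw [Finset.sum_comm]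
    apply Finset.sum_le_sum
    intro A _
    by_cases h : ∃ u' ∈ G, A u' = A u
    · simp only [h, if_true]
      obtain ⟨w, hw, hwe⟩ := h
      have := Finset.single_le_sum (f := fun u' => (if A u' = A u then p A else 0 : ℝ))
        (fun i _ => by split_ifs <;> simp [hp0 A]) hw
      simpa [hwe] using this
    · simp only [h, if_false]
      exact Finset.sum_nonneg fun i _ => by split_ifs <;> simp [hp0 A]
  have key' : ∑ u' ∈ G, ∑ A, (if A u' = A u then p A else 0 : ℝ)
      ≤ (G.card : ℝ) * α / (ImA.card : ℝ) + β := by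
    calc ∑ u' ∈ G, ∑ A, (if A u' = A u then p A else 0 : ℝ)
        = ∑ u' ∈ G, ∑ u'' ∈ ({u} : Finset _), ∑ A, (if A u' = A u'' then p A else 0 : ℝ) := by
          simp
      _ ≤ ((G ∩ {u}).card : ℝ)
          + (G.card : ℝ) * (({u} : Finset (Fin n → U)).card : ℝ) * α / (ImA.card : ℝ)
          + (min G.card ({u} : Finset (Fin n → U)).card : ℕ) * β := key
      _ ≤ (G.card : ℝ) * α / (ImA.card : ℝ) + β := by
          rw [hinter]
          simp only [Finset.card_singleton, Nat.cast_one, mul_one, Nat.cast_zero, zero_add]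
          simp only [Finset.card_singleton] at hmin
          linarith [hmin]
  exact hstep.trans key'
end

section
/- Suppose the product ensemble (A × B, p_A × p_B) of functions (A,B) with A : U^n → Ū_A, B : U^n → Ū_B has the (α_{AB}, β_{AB})-hash property (with respect to the joint map u ↦ (A u, B u)), and let p_C, p_M be uniform on Im A and Im B respectively, with A, B, C, M independent. Then for any nonempty T ⊆ U^n, the probability that T ∩ C_{AB}(c, m) = ∅, where C_{AB}(c,m) = {u : A u = c, B u = m}, is at most α_{AB} − 1 + |Im A| |Im B| (β_{AB} + 1)/|T|. -/
open Finset

set_option maxHeartbeats 2000000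

lemma pointwise_bound {L E S t sstar : ℝ} (hL : 0 < L) (ht0 : 0 < t) (hE0 : 0 ≤ E)
    (hss : 0 < sstar) (hS0 : 0 ≤ S) (hkey : t^2 ≤ (L - E) * S) :
    E / L ≤ 1 - 2*(t^2/L)/sstar + (t^2/L) * S / sstar^2 := by
  have ht2 : 0 < t^2 := by positivity
  have hSpos : 0 < S := by nlinarith
  have main : E * sstar^2 * S ≤ (L*sstar^2 - 2*t^2*sstar + t^2*S) * S := by
    nlinarith [mul_le_mul_of_nonneg_right hkey (sq_nonneg sstar),
      mul_nonneg ht2.le (sq_nonneg (S - sstar))]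
  have main2 : E * sstar^2 ≤ L*sstar^2 - 2*t^2*sstar + t^2*S :=
    le_of_mul_le_mul_right main hSpos
  rw [div_le_iff₀ hL]
  have hrw : (1 - 2*(t^2/L)/sstar + (t^2/L) * S / sstar^2) * L
      = (L*sstar^2 - 2*t^2*sstar + t^2*S)/sstar^2 := by
    field_simp
  rw [hrw, le_div_iff₀ (by positivity)]
  linarith [main2]

lemma final_bound {L t α β : ℝ} (hL : 0 < L) (ht : 1 ≤ t) (hα : 0 ≤ α) (hβ : 0 ≤ β) :
    1 - (t^2/L)/(t + t^2*α/L + t*β) ≤ α - 1 + L*(β+1)/t := by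
  have ht0 : 0 < t := by linarith
  have hss : 0 < t + t^2*α/L + t*β := by positivity
  have hD : 0 < L*(1+β) + t*α := by nlinarith
  have h1 : (t^2/L)/(t + t^2*α/L + t*β) = t/(L*(1+β) + t*α) := by
    field_simp
    ring
  rw [h1]
  have key : α - 1 + L*(β+1)/t - (1 - t/(L*(1+β)+t*α))
      = (t*(α-1) + L*(1+β))^2 / (t*(L*(1+β)+t*α)) := by
    field_simp
    ring
  have hnn : 0 ≤ (t*(α-1) + L*(1+β))^2 / (t*(L*(1+β)+t*α)) :=
    div_nonneg (sq_nonneg _) (by positivity)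
  linarith

open Finset

open scoped Classical in
/-- If the product ensemble `(𝒜 × ℬ, p_A × p_B)` (via the joint map
`u ↦ (Au, Bu)`) has the `(α_{AB}, β_{AB})`-hash property, and `c, m` are uniform
on `Im 𝒜`, `Im ℬ`, then for any nonempty `T ⊆ U^n` the probability that
`T ∩ C_{AB}(c,m) = ∅` is at most
`α_{AB} − 1 + |Im 𝒜||Im ℬ|(β_{AB}+1)/|T|`. -/
theorem hash_nonempty_coset
    {U CA CB : Type*} [Fintype U] [Fintype CA] [Fintype CB] {n : ℕ}
    (pA : ((Fin n → U) → CA) → ℝ) (pB : ((Fin n → U) → CB) → ℝ)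
    (hpA0 : ∀ A, 0 ≤ pA A) (hpA1 : ∑ A, pA A = 1)
    (hpB0 : ∀ B, 0 ≤ pB B) (hpB1 : ∑ B, pB B = 1)
    (ImA : Finset CA) (ImB : Finset CB)
    (hImA : ∀ A, pA A ≠ 0 → Finset.univ.image A = ImA)
    (hImB : ∀ B, pB B ≠ 0 → Finset.univ.image B = ImB)
    (αAB βAB : ℝ) (hα : 0 ≤ αAB) (hβ : 0 ≤ βAB)
    (hhash : ∀ T T' : Finset (Fin n → U),
      ∑ u ∈ T, ∑ u' ∈ T',
          (∑ A, ∑ B, if A u = A u' ∧ B u = B u' then pA A * pB B else 0)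
        ≤ ((T ∩ T').card : ℝ)
          + (T.card : ℝ) * (T'.card : ℝ) * αAB / ((ImA.card : ℝ) * (ImB.card : ℝ))
          + (min T.card T'.card : ℕ) * βAB)
    (T : Finset (Fin n → U)) (hT : T.Nonempty) :
    ∑ A, ∑ B, pA A * pB B *
        ((∑ c ∈ ImA, ∑ m ∈ ImB,
            if ∀ u ∈ T, ¬(A u = c ∧ B u = m) then (1 : ℝ) else 0)
          / ((ImA.card : ℝ) * (ImB.card : ℝ)))
      ≤ αAB - 1 + (ImA.card : ℝ) * (ImB.card : ℝ) * (βAB + 1) / (T.card : ℝ) := by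
  obtain ⟨u0, hu0T⟩ := hT
  have huniv : (Finset.univ : Finset (Fin n → U)).Nonempty := ⟨u0, mem_univ u0⟩
  have hAex : ∃ A, pA A ≠ 0 := by
    by_contra h
    push_neg at h
    simp [h] at hpA1
  have hBex : ∃ B, pB B ≠ 0 := by
    by_contra h
    push_neg at h
    simp [h] at hpB1
  obtain ⟨A0, hA0⟩ := hAex
  obtain ⟨B0, hB0⟩ := hBex
  have hImAne : ImA.Nonempty := hImA A0 hA0 ▸ huniv.image A0
  have hImBne : ImB.Nonempty := hImB B0 hB0 ▸ huniv.image B0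
  set L : ℝ := (ImA.card : ℝ) * (ImB.card : ℝ) with hLdef
  have hL : 0 < L := by
    have h1 : 0 < ImA.card := card_pos.2 hImAne
    have h2 : 0 < ImB.card := card_pos.2 hImBne
    rw [hLdef]
    exact mul_pos (by exact_mod_cast h1) (by exact_mod_cast h2)
  set t : ℝ := (T.card : ℝ) with htdef
  have ht : 1 ≤ t := by
    rw [htdef]
    exact_mod_cast Nat.one_le_iff_ne_zero.2 (Finset.card_ne_zero_of_mem hu0T)
  have ht0 : 0 < t := lt_of_lt_of_le one_pos ht
  set sstar : ℝ := t + t^2 * αAB / L + t * βAB with hsdef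
  have hss : 0 < sstar := by
    have h1 : 0 ≤ t^2 * αAB / L := by positivity
    have h2 : 0 ≤ t * βAB := by positivity
    rw [hsdef]; linarith
  set cc : ℝ := t^2 / L with hccdef
  set S : ((Fin n → U) → CA) → ((Fin n → U) → CB) → ℝ := fun A B =>
    ∑ u ∈ T, ∑ u' ∈ T, if A u = A u' ∧ B u = B u' then (1:ℝ) else 0 with hSdef
  have hS0 : ∀ A B, 0 ≤ S A B := by
    intro A B
    simp only [hSdef]
    refine sum_nonneg fun u _ => sum_nonneg fun u' _ => ?_
    split <;> norm_num
  -- pointwise bound on the conditional probability of missing `T`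
  have hpoint : ∀ A B, pA A ≠ 0 → pB B ≠ 0 →
      (∑ c ∈ ImA, ∑ m ∈ ImB,
          if ∀ u ∈ T, ¬(A u = c ∧ B u = m) then (1 : ℝ) else 0) / L
        ≤ 1 - 2*cc/sstar + cc * S A B / sstar^2 := by
    intro A B hA hB
    obtain ⟨f, hfdef⟩ : ∃ f : (Fin n → U) → CA × CB, f = fun u => (A u, B u) := ⟨_, rfl⟩
    have hmem : ∀ u ∈ T, f u ∈ ImA ×ˢ ImB := by
      intro u hu
      rw [hfdef, mem_product]
      exact ⟨hImA A hA ▸ mem_image_of_mem A (mem_univ u),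
             hImB B hB ▸ mem_image_of_mem B (mem_univ u)⟩
    -- rewrite the numerator as the number of empty fibers
    have hEeq : (∑ c ∈ ImA, ∑ m ∈ ImB,
          if ∀ u ∈ T, ¬(A u = c ∧ B u = m) then (1 : ℝ) else 0)
        = ((((ImA ×ˢ ImB).filter fun p => ∀ u ∈ T, f u ≠ p).card : ℕ) : ℝ) := by
      rw [← Finset.sum_boole, Finset.sum_product]
      refine Finset.sum_congr rfl fun c _ => Finset.sum_congr rfl fun m _ => ?_
      refine if_congr ?_ rfl rfl
      simp [hfdef, Prod.ext_iff]
    -- the fibers partition `T`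
    have hsumN : ∑ p ∈ ImA ×ˢ ImB, (T.filter fun u => f u = p).card = T.card :=
      (Finset.card_eq_sum_card_fiberwise hmem).symm
    -- rewrite the collision count as a sum of squared fiber sizes
    have hSeq : S A B = ∑ p ∈ ImA ×ˢ ImB, (((T.filter fun u => f u = p).card : ℕ) : ℝ)^2 := by
      simp only [hSdef]
      have h1 : ∀ u ∈ T, (∑ u' ∈ T, if A u = A u' ∧ B u = B u' then (1:ℝ) else 0)
          = (((T.filter fun u' => f u' = f u).card : ℕ) : ℝ) := by
        intro u hu
        rw [show (∑ u' ∈ T, if A u = A u' ∧ B u = B u' then (1:ℝ) else 0)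
            = ∑ u' ∈ T, if f u' = f u then (1:ℝ) else 0 from
          Finset.sum_congr rfl fun u' _ => if_congr
            (by rw [hfdef]; simp only [Prod.ext_iff]; tauto) rfl rfl]
        exact Finset.sum_boole _ _
      rw [Finset.sum_congr rfl h1,
        ← Finset.sum_fiberwise_of_maps_to hmem
          (fun u => (((T.filter fun u' => f u' = f u).card : ℕ) : ℝ))]
      refine Finset.sum_congr rfl fun p hp => ?_
      have h2 : ∀ u ∈ T.filter (fun u => f u = p),
          (((T.filter fun u' => f u' = f u).card : ℕ) : ℝ)
            = (((T.filter fun u' => f u' = p).card : ℕ) : ℝ) := fun u hu => by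
        rw [(Finset.mem_filter.1 hu).2]
      rw [Finset.sum_congr rfl h2, Finset.sum_const, nsmul_eq_mul]
      ring
    -- the nonempty fibers
    have hQcard : ((((ImA ×ˢ ImB).filter fun p => ¬ ∀ u ∈ T, f u ≠ p).card : ℕ) : ℝ)
        = (((ImA ×ˢ ImB).card : ℕ) : ℝ)
          - ((((ImA ×ˢ ImB).filter fun p => ∀ u ∈ T, f u ≠ p).card : ℕ) : ℝ) := by
      have h := Finset.card_filter_add_card_filter_not
        (s := ImA ×ˢ ImB) (p := fun p => ∀ u ∈ T, f u ≠ p)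
      rw [eq_sub_iff_add_eq, add_comm]
      exact_mod_cast congrArg (Nat.cast : ℕ → ℝ) h
    have hTQ : ∑ p ∈ (ImA ×ˢ ImB).filter (fun p => ¬ ∀ u ∈ T, f u ≠ p),
        (T.filter fun u => f u = p).card = T.card := by
      rw [← hsumN]
      apply Finset.sum_filter_of_ne
      intro p hp hNp hall
      obtain ⟨u, hu⟩ := Finset.card_pos.1 (Nat.pos_of_ne_zero hNp)
      obtain ⟨hu1, hu2⟩ := Finset.mem_filter.1 hu
      exact hall u hu1 hu2
    -- Cauchy-Schwarz
    have hC : ((T.card : ℕ) : ℝ)^2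
        ≤ ((((ImA ×ˢ ImB).filter fun p => ¬ ∀ u ∈ T, f u ≠ p).card : ℕ) : ℝ)
          * ∑ p ∈ (ImA ×ˢ ImB).filter (fun p => ¬ ∀ u ∈ T, f u ≠ p),
              (((T.filter fun u => f u = p).card : ℕ) : ℝ)^2 := by
      have h := sq_sum_le_card_mul_sum_sq
        (s := (ImA ×ˢ ImB).filter (fun p => ¬ ∀ u ∈ T, f u ≠ p))
        (f := fun p => (((T.filter fun u => f u = p).card : ℕ) : ℝ))
      have h2 : (∑ p ∈ (ImA ×ˢ ImB).filter (fun p => ¬ ∀ u ∈ T, f u ≠ p),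
          (((T.filter fun u => f u = p).card : ℕ) : ℝ)) = ((T.card : ℕ) : ℝ) := by
        exact_mod_cast congrArg (Nat.cast : ℕ → ℝ) hTQ
      rw [h2] at h
      exact h
    have hmono : (∑ p ∈ (ImA ×ˢ ImB).filter (fun p => ¬ ∀ u ∈ T, f u ≠ p),
          (((T.filter fun u => f u = p).card : ℕ) : ℝ)^2)
        ≤ ∑ p ∈ ImA ×ˢ ImB, (((T.filter fun u => f u = p).card : ℕ) : ℝ)^2 :=
      Finset.sum_le_sum_of_subset_of_nonneg (Finset.filter_subset _ _)
        (fun _ _ _ => sq_nonneg _)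
    have hprodL : (((ImA ×ˢ ImB).card : ℕ) : ℝ) = L := by
      rw [card_product, hLdef]; push_cast; ring
    have hkey : t^2
        ≤ (L - ((((ImA ×ˢ ImB).filter fun p => ∀ u ∈ T, f u ≠ p).card : ℕ) : ℝ)) * S A B := by
      calc t^2 = ((T.card : ℕ) : ℝ)^2 := by rw [htdef]
        _ ≤ ((((ImA ×ˢ ImB).filter fun p => ¬ ∀ u ∈ T, f u ≠ p).card : ℕ) : ℝ)
            * ∑ p ∈ (ImA ×ˢ ImB).filter (fun p => ¬ ∀ u ∈ T, f u ≠ p),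
                (((T.filter fun u => f u = p).card : ℕ) : ℝ)^2 := hC
        _ ≤ ((((ImA ×ˢ ImB).filter fun p => ¬ ∀ u ∈ T, f u ≠ p).card : ℕ) : ℝ)
            * ∑ p ∈ ImA ×ˢ ImB, (((T.filter fun u => f u = p).card : ℕ) : ℝ)^2 :=
          mul_le_mul_of_nonneg_left hmono (Nat.cast_nonneg _)
        _ = (L - ((((ImA ×ˢ ImB).filter fun p => ∀ u ∈ T, f u ≠ p).card : ℕ) : ℝ))
            * ∑ p ∈ ImA ×ˢ ImB, (((T.filter fun u => f u = p).card : ℕ) : ℝ)^2 := by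
          rw [hQcard, hprodL]
        _ = _ := by rw [hSeq]
    rw [hEeq, hccdef]
    exact pointwise_bound hL ht0 (Nat.cast_nonneg _) hss (hS0 A B) hkey
  -- compare the sum with the linear bound
  have hsum1 : (∑ A, ∑ B, pA A * pB B *
        ((∑ c ∈ ImA, ∑ m ∈ ImB,
            if ∀ u ∈ T, ¬(A u = c ∧ B u = m) then (1 : ℝ) else 0) / L))
      ≤ ∑ A, ∑ B, pA A * pB B * (1 - 2*cc/sstar + cc * S A B / sstar^2) := by
    refine sum_le_sum fun A _ => sum_le_sum fun B _ => ?_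
    rcases eq_or_ne (pA A) 0 with h | h
    · simp [h]
    rcases eq_or_ne (pB B) 0 with h' | h'
    · simp [h']
    exact mul_le_mul_of_nonneg_left (hpoint A B h h') (mul_nonneg (hpA0 A) (hpB0 B))
  -- the expected collision count is bounded via the hash property
  have hhashS : (∑ A, ∑ B, pA A * pB B * S A B) ≤ sstar := by
    have hswap : (∑ A, ∑ B, pA A * pB B * S A B)
        = ∑ u ∈ T, ∑ u' ∈ T,
            (∑ A, ∑ B, if A u = A u' ∧ B u = B u' then pA A * pB B else 0) := by
      simp_rw [hSdef, Finset.mul_sum, mul_ite, mul_one, mul_zero]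
      calc (∑ A, ∑ B, ∑ u ∈ T, ∑ u' ∈ T,
              if A u = A u' ∧ B u = B u' then pA A * pB B else 0)
          = ∑ A, ∑ u ∈ T, ∑ B, ∑ u' ∈ T,
              (if A u = A u' ∧ B u = B u' then pA A * pB B else 0) :=
            Finset.sum_congr rfl fun A _ => Finset.sum_comm
        _ = ∑ A, ∑ u ∈ T, ∑ u' ∈ T, ∑ B,
              (if A u = A u' ∧ B u = B u' then pA A * pB B else 0) :=
            Finset.sum_congr rfl fun A _ => Finset.sum_congr rfl fun u _ => Finset.sum_comm
        _ = ∑ u ∈ T, ∑ A, ∑ u' ∈ T, ∑ B,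
              (if A u = A u' ∧ B u = B u' then pA A * pB B else 0) := Finset.sum_comm
        _ = ∑ u ∈ T, ∑ u' ∈ T, ∑ A, ∑ B,
              (if A u = A u' ∧ B u = B u' then pA A * pB B else 0) :=
            Finset.sum_congr rfl fun u _ => Finset.sum_comm
    have h := hhash T T
    rw [inter_self, min_self] at h
    have hrhs : ((T.card : ℝ))
        + (T.card : ℝ) * (T.card : ℝ) * αAB / ((ImA.card : ℝ) * (ImB.card : ℝ))
        + ((T.card : ℕ) : ℝ) * βAB = sstar := by
      rw [hsdef, htdef, hLdef]; push_cast; ring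
    rw [hswap]
    calc _ ≤ _ := h
      _ = sstar := hrhs
  have hone : (∑ A, ∑ B, pA A * pB B) = 1 := by
    rw [← Finset.sum_mul_sum, hpA1, hpB1, one_mul]
  have hsum2 : (∑ A, ∑ B, pA A * pB B * (1 - 2*cc/sstar + cc * S A B / sstar^2))
      = (1 - 2*cc/sstar) * (∑ A, ∑ B, pA A * pB B)
        + (cc/sstar^2) * (∑ A, ∑ B, pA A * pB B * S A B) := by
    simp_rw [Finset.mul_sum]
    rw [← Finset.sum_add_distrib]
    refine Finset.sum_congr rfl fun A _ => ?_
    rw [← Finset.sum_add_distrib]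
    refine Finset.sum_congr rfl fun B _ => ?_
    ring
  have hcc0 : 0 ≤ cc := by rw [hccdef]; exact div_nonneg (sq_nonneg t) hL.le
  have hstep : (∑ A, ∑ B, pA A * pB B *
        ((∑ c ∈ ImA, ∑ m ∈ ImB,
            if ∀ u ∈ T, ¬(A u = c ∧ B u = m) then (1 : ℝ) else 0) / L))
      ≤ 1 - cc/sstar := by
    calc _ ≤ ∑ A, ∑ B, pA A * pB B * (1 - 2*cc/sstar + cc * S A B / sstar^2) := hsum1
      _ = (1 - 2*cc/sstar) * (∑ A, ∑ B, pA A * pB B)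
            + (cc/sstar^2) * (∑ A, ∑ B, pA A * pB B * S A B) := hsum2
      _ ≤ (1 - 2*cc/sstar) * 1 + (cc/sstar^2) * sstar := by
          rw [hone]
          refine add_le_add_right (mul_le_mul_of_nonneg_left hhashS ?_) _
          exact div_nonneg hcc0 (sq_nonneg sstar)
      _ = 1 - cc/sstar := by
          field_simp
          ring
  calc (∑ A, ∑ B, pA A * pB B *
        ((∑ c ∈ ImA, ∑ m ∈ ImB,
            if ∀ u ∈ T, ¬(A u = c ∧ B u = m) then (1 : ℝ) else 0) / L))
      ≤ 1 - cc/sstar := hstep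
    _ ≤ αAB - 1 + L * (βAB + 1) / t := by
        rw [hccdef, hsdef]
        exact final_bound hL ht hα hβ
end

section
/- Suppose the ensemble (A, p_A) of functions A : X^n → X^{l_A} has the (α_A, β_A)-hash property at length n. Consider the fixed-rate source code with encoder φ(x) = A x and minimum-entropy decoder g_A(c) = argmin_{x' : A x' = c} H(x'). Then the expected error probability over the ensemble satisfies E_{p_A}[μ_X({x : g_A(A x) ≠ x})] ≤ max{α_A |X|^{l_A}/|Im A|, 1} · 2^{−n[F_X(R) − 2λ_X(n)]} + β_A, where R = (l_A/n) log|X|, F_X(R) = min_{U'} [D(U'‖μ_X) + |R − H(U')|^+] over types U', and λ_X(n) = |X| log(n+1)/n. -/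
open Finset Real

/-- The empirical distribution (type) of a sequence `x : Fin n → X`. -/
noncomputable def empDist {X : Type*} [Fintype X] [DecidableEq X] (n : ℕ)
    (x : Fin n → X) : X → ℝ :=
  fun a => ((Finset.univ.filter (fun i => x i = a)).card : ℝ) / n

/-- Shannon entropy (base 2), convention `0 · log 0 = 0`. -/
noncomputable def ent2 {X : Type*} [Fintype X] (p : X → ℝ) : ℝ :=
  ∑ a, -(p a * Real.logb 2 (p a))

/-- Kullback–Leibler divergence (base 2). -/
noncomputable def kl2 {X : Type*} [Fintype X] (p q : X → ℝ) : ℝ :=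
  ∑ a, p a * Real.logb 2 (p a / q a)

section Helpers
set_option linter.unusedSectionVars false
variable {X : Type*} [Fintype X] [DecidableEq X] {n : ℕ}

/-- count of symbol `a` in `x` -/
def cnt (x : Fin n → X) (a : X) : ℕ := (Finset.univ.filter (fun i => x i = a)).card

lemma empDist_eq (x : Fin n → X) (a : X) : empDist n x a = (cnt x a : ℝ) / n := rfl

lemma cnt_le (x : Fin n → X) (a : X) : cnt x a ≤ n := by
  simpa [cnt] using Finset.card_filter_le Finset.univ (fun i => x i = a)

lemma sum_cnt (x : Fin n → X) : ∑ a, cnt x a = n := by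
  classical
  have := Finset.card_eq_sum_card_fiberwise
    (f := x) (s := Finset.univ) (t := Finset.univ) (fun i _ => Finset.mem_univ _)
  simpa [cnt] using this.symm

lemma empDist_nonneg (x : Fin n → X) (a : X) : 0 ≤ empDist n x a := by
  unfold empDist; positivity

lemma empDist_sum (hn : 0 < n) (x : Fin n → X) : ∑ a, empDist n x a = 1 := by
  simp only [empDist_eq, ← Finset.sum_div]
  rw [← Nat.cast_sum, sum_cnt]
  field_simp

lemma prod_count {q : X → ℝ} (x : Fin n → X) :
    ∏ i, q (x i) = ∏ a, q a ^ cnt x a := by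
  classical
  rw [Finset.prod_comp]
  refine Finset.prod_subset (Finset.subset_univ _) ?_
  intro a _ ha
  have h0 : cnt x a = 0 := by
    rw [cnt, Finset.card_eq_zero]
    ext i
    simp only [Finset.mem_filter, Finset.mem_univ, true_and, Finset.notMem_empty, iff_false]
    intro h
    exact ha (Finset.mem_image.2 ⟨i, Finset.mem_univ i, h⟩)
  show q a ^ cnt x a = 1
  simp [h0]

lemma prod_pow_eq {q : X → ℝ} {N : X → ℕ} (h : ∀ a, N a ≠ 0 → 0 < q a) :
    ∏ a, q a ^ N a = (2:ℝ) ^ (∑ a, (N a : ℝ) * Real.logb 2 (q a)) := by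
  rw [Real.rpow_sum_of_pos two_pos]
  refine Finset.prod_congr rfl (fun a _ => ?_)
  rcases Nat.eq_zero_or_pos (N a) with h0 | h0
  · simp [h0]
  · have hq : 0 < q a := h a h0.ne'
    rw [mul_comm, Real.rpow_mul_natCast (by norm_num), Real.rpow_logb two_pos (by norm_num) hq]

/-- `∏ i, P(x i) = 2^{-n H(P)}` for `P` the type of `x`. -/
lemma prod_empDist (hn : 0 < n) (x : Fin n → X) :
    ∏ i, empDist n x (x i) = (2:ℝ) ^ (-(n:ℝ) * ent2 (empDist n x)) := by
  rw [prod_count, prod_pow_eq (fun a ha => by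
    rw [empDist_eq]
    exact div_pos (by exact_mod_cast Nat.pos_of_ne_zero ha) (by exact_mod_cast hn))]
  congr 1
  rw [ent2, Finset.mul_sum]
  refine Finset.sum_congr rfl (fun a _ => ?_)
  have hc : ((cnt x a : ℝ)) = (n:ℝ) * empDist n x a := by
    rw [empDist_eq]; field_simp
  rw [hc]; ring

lemma prod_mu_le (hn : 0 < n) {μ : X → ℝ} (hμ0 : ∀ a, 0 ≤ μ a) (x : Fin n → X) :
    ∏ i, μ (x i) ≤ (2:ℝ) ^ (-(n:ℝ) * (kl2 (empDist n x) μ + ent2 (empDist n x))) := by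
  classical
  by_cases hz : ∀ a, cnt x a ≠ 0 → 0 < μ a
  · rw [prod_count, prod_pow_eq hz]
    apply Real.rpow_le_rpow_of_exponent_le one_le_two
    apply le_of_eq
    unfold kl2 ent2
    rw [← Finset.sum_add_distrib, Finset.mul_sum]
    refine Finset.sum_congr rfl (fun a _ => ?_)
    rcases Nat.eq_zero_or_pos (cnt x a) with h0 | h0
    · have hP : empDist n x a = 0 := by rw [empDist_eq, h0]; simp
      simp [h0, hP]
    · have hμa : 0 < μ a := hz a h0.ne'
      have hP : 0 < empDist n x a := by
        rw [empDist_eq]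
        exact div_pos (by exact_mod_cast h0) (by exact_mod_cast hn)
      have hcnt : (cnt x a : ℝ) = (n:ℝ) * empDist n x a := by
        rw [empDist_eq]; field_simp
      rw [Real.logb_div hP.ne' hμa.ne', hcnt]
      ring
  · push_neg at hz
    obtain ⟨a, ha, hμa⟩ := hz
    have hμ0a : μ a = 0 := le_antisymm (by linarith [hμ0 a]) (hμ0 a)
    have hprod : ∏ i, μ (x i) = 0 := by
      rw [prod_count]
      exact Finset.prod_eq_zero (Finset.mem_univ a) (by simp [hμ0a, zero_pow ha])
    rw [hprod]
    positivity

lemma two_rpow_mul_neg (t : ℝ) : (2:ℝ) ^ (-t) * (2:ℝ) ^ t = 1 := by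
  rw [← Real.rpow_add two_pos]; simp

lemma sum_class_le (hn : 0 < n) (x0 : Fin n → X) :
    ∑ x' ∈ Finset.univ.filter (fun x' : Fin n → X => empDist n x' = empDist n x0),
      ∏ i, empDist n x0 (x' i) ≤ 1 := by
  classical
  have hsum1 : ∑ x' : Fin n → X, ∏ i, empDist n x0 (x' i) = 1 := by
    have h := Finset.prod_univ_sum (fun _ : Fin n => (Finset.univ : Finset X))
      (fun _ a => empDist n x0 a)
    rw [Fintype.piFinset_univ, empDist_sum hn x0, Finset.prod_const, one_pow] at h
    exact h.symm
  rw [← hsum1]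
  exact Finset.sum_le_sum_of_subset_of_nonneg (Finset.filter_subset _ _)
    (fun x' _ _ => Finset.prod_nonneg fun i _ => empDist_nonneg x0 (x' i))

lemma card_class_aux (hn : 0 < n) (x0 : Fin n → X) :
    (((Finset.univ.filter (fun x' : Fin n → X => empDist n x' = empDist n x0)).card : ℝ))
      * (2:ℝ) ^ (-(n:ℝ) * ent2 (empDist n x0)) ≤ 1 := by
  classical
  have hle := sum_class_le hn x0
  have heq : ∀ x' ∈ Finset.univ.filter
      (fun x' : Fin n → X => empDist n x' = empDist n x0),
      ∏ i, empDist n x0 (x' i) = (2:ℝ) ^ (-(n:ℝ) * ent2 (empDist n x0)) := by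
    intro x' hx'
    have h1 : empDist n x' = empDist n x0 := (Finset.mem_filter.1 hx').2
    rw [← h1]
    exact prod_empDist hn x'
  rwa [Finset.sum_congr rfl heq, Finset.sum_const, nsmul_eq_mul] at hle

lemma card_class_le (hn : 0 < n) (x0 : Fin n → X) :
    (((Finset.univ.filter (fun x' : Fin n → X => empDist n x' = empDist n x0)).card : ℝ))
      ≤ (2:ℝ) ^ ((n:ℝ) * ent2 (empDist n x0)) := by
  have h := card_class_aux hn x0
  have h1 := two_rpow_mul_neg ((n:ℝ) * ent2 (empDist n x0))
  have h2 : (0:ℝ) < (2:ℝ) ^ (-((n:ℝ) * ent2 (empDist n x0))) := Real.rpow_pos_of_pos two_pos _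
  rw [neg_mul] at h
  nlinarith [h, h1, h2]

lemma card_image_empDist_le :
    ((Finset.univ : Finset (Fin n → X)).image (empDist n)).card ≤ (n+1) ^ Fintype.card X := by
  classical
  set f : (X → Fin (n+1)) → (X → ℝ) := fun N a => ((N a : ℕ) : ℝ)/n with hf
  set g : (Fin n → X) → (X → Fin (n+1)) :=
    fun x a => ⟨cnt x a, Nat.lt_succ_of_le (cnt_le x a)⟩ with hg
  have h : empDist n = f ∘ g := funext fun x => funext fun a => by
    simp [empDist_eq, hf, hg, Function.comp]
  rw [h, ← Finset.image_image]
  calc ((Finset.univ.image g).image f).card ≤ (Finset.univ.image g).card :=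
        Finset.card_image_le
    _ ≤ (Finset.univ : Finset (X → Fin (n+1))).card :=
        Finset.card_le_card (Finset.subset_univ _)
    _ = (n+1) ^ Fintype.card X := by
        rw [Finset.card_univ, Fintype.card_fun, Fintype.card_fin]

lemma card_entLE (hn : 0 < n) (h : ℝ) :
    ((Finset.univ.filter (fun x' : Fin n → X => ent2 (empDist n x') ≤ h)).card : ℝ)
      ≤ ((n:ℝ)+1) ^ (Fintype.card X) * (2:ℝ) ^ ((n:ℝ) * h) := by
  classical
  set S := Finset.univ.filter (fun x' : Fin n → X => ent2 (empDist n x') ≤ h) with hS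
  set t := (Finset.univ : Finset (Fin n → X)).image (empDist n) with ht
  have hcard := Finset.card_eq_sum_card_fiberwise
    (f := empDist n) (s := S) (t := t)
    (fun x _ => Finset.mem_image.2 ⟨x, Finset.mem_univ x, rfl⟩)
  have hfib : ∀ P ∈ t, ((S.filter (fun x => empDist n x = P)).card : ℝ)
      ≤ (2:ℝ) ^ ((n:ℝ) * h) := by
    intro P hP
    rcases Finset.eq_empty_or_nonempty (S.filter (fun x => empDist n x = P)) with he | hne
    · rw [he]; simp; positivity
    · obtain ⟨x', hx'⟩ := hne
      have hx'S : x' ∈ S := (Finset.mem_filter.1 hx').1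
      have hx'P : empDist n x' = P := (Finset.mem_filter.1 hx').2
      have hent : ent2 (empDist n x') ≤ h := (Finset.mem_filter.1 hx'S).2
      have hsub : S.filter (fun x => empDist n x = P) ⊆
          Finset.univ.filter (fun x => empDist n x = empDist n x') := by
        intro y hy
        rw [Finset.mem_filter] at hy ⊢
        exact ⟨Finset.mem_univ y, hy.2.trans hx'P.symm⟩
      calc ((S.filter (fun x => empDist n x = P)).card : ℝ)
          ≤ ((Finset.univ.filter (fun x => empDist n x = empDist n x')).card : ℝ) := by
            exact_mod_cast Finset.card_le_card hsub
        _ ≤ (2:ℝ) ^ ((n:ℝ) * ent2 (empDist n x')) := card_class_le hn x'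
        _ ≤ (2:ℝ) ^ ((n:ℝ) * h) := by
            apply Real.rpow_le_rpow_of_exponent_le one_le_two
            exact mul_le_mul_of_nonneg_left hent (Nat.cast_nonneg n)
  calc (S.card : ℝ) = ∑ P ∈ t, ((S.filter (fun x => empDist n x = P)).card : ℝ) := by
        exact_mod_cast hcard
    _ ≤ ∑ P ∈ t, (2:ℝ) ^ ((n:ℝ) * h) := Finset.sum_le_sum hfib
    _ = (t.card : ℝ) * (2:ℝ) ^ ((n:ℝ) * h) := by rw [Finset.sum_const, nsmul_eq_mul]
    _ ≤ ((n:ℝ)+1) ^ (Fintype.card X) * (2:ℝ) ^ ((n:ℝ) * h) := by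
        apply mul_le_mul_of_nonneg_right _ (Real.rpow_nonneg (by norm_num) _)
        calc (t.card : ℝ) ≤ (((n+1) ^ Fintype.card X : ℕ) : ℝ) := by
              exact_mod_cast card_image_empDist_le
          _ = ((n:ℝ)+1) ^ (Fintype.card X) := by push_cast; ring

lemma sum_two_pow_neg_ent (hn : 0 < n) :
    ∑ x : Fin n → X, (2:ℝ) ^ (-(n:ℝ) * ent2 (empDist n x))
      ≤ ((n:ℝ)+1) ^ (Fintype.card X) := by
  classical
  set t := (Finset.univ : Finset (Fin n → X)).image (empDist n) with ht
  rw [← Finset.sum_fiberwise_of_maps_to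
    (fun x _ => Finset.mem_image.2 ⟨x, Finset.mem_univ x, rfl⟩ :
      ∀ x ∈ (Finset.univ : Finset (Fin n → X)), empDist n x ∈ t)]
  have hfib : ∀ P ∈ t, ∑ x ∈ Finset.univ.filter (fun x : Fin n → X => empDist n x = P),
      (2:ℝ) ^ (-(n:ℝ) * ent2 (empDist n x)) ≤ 1 := by
    intro P hP
    rcases Finset.eq_empty_or_nonempty
      (Finset.univ.filter (fun x : Fin n → X => empDist n x = P)) with he | hne
    · rw [he]; simp
    · obtain ⟨x', hx'⟩ := hne
      have hx'P : empDist n x' = P := (Finset.mem_filter.1 hx').2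
      have hcong : ∀ x ∈ Finset.univ.filter (fun x : Fin n → X => empDist n x = P),
          (2:ℝ) ^ (-(n:ℝ) * ent2 (empDist n x)) = (2:ℝ) ^ (-(n:ℝ) * ent2 (empDist n x')) := by
        intro y hy
        have : empDist n y = empDist n x' := (Finset.mem_filter.1 hy).2.trans hx'P.symm
        rw [this]
      rw [Finset.sum_congr rfl hcong, Finset.sum_const, nsmul_eq_mul]
      have heq : Finset.univ.filter (fun x : Fin n → X => empDist n x = P)
          = Finset.univ.filter (fun x : Fin n → X => empDist n x = empDist n x') := by
        apply Finset.filter_congr; intro y _; simp [hx'P]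
      rw [heq]
      exact card_class_aux hn x'
  calc ∑ P ∈ t, ∑ x ∈ Finset.univ.filter (fun x : Fin n → X => empDist n x = P),
        (2:ℝ) ^ (-(n:ℝ) * ent2 (empDist n x))
      ≤ ∑ P ∈ t, (1:ℝ) := Finset.sum_le_sum hfib
    _ = (t.card : ℝ) := by simp
    _ ≤ ((n:ℝ)+1) ^ (Fintype.card X) := by
        calc (t.card : ℝ) ≤ (((n+1) ^ Fintype.card X : ℕ) : ℝ) := by
              exact_mod_cast card_image_empDist_le
          _ = ((n:ℝ)+1) ^ (Fintype.card X) := by push_cast; ring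

end Helpers
open scoped Classical in
set_option maxHeartbeats 1000000 in
/-- Fixed-rate universal source coding: if `(𝒜, p_A)` has the `(α_A, β_A)`-hash
property, encoding is `x ↦ Ax` and decoding is minimum-entropy decoding, then
the ensemble-average error probability is at most
`max{α_A |X|^{l_A}/|Im 𝒜|, 1}·2^{−n[F_X(R) − 2λ_X]} + β_A`. -/
theorem universal_source_coding
    {X : Type*} [Fintype X] [DecidableEq X] {n lA : ℕ} (hn : 0 < n)
    (p : ((Fin n → X) → (Fin lA → X)) → ℝ)
    (hp0 : ∀ A, 0 ≤ p A) (hp1 : ∑ A, p A = 1)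
    (ImA : Finset (Fin lA → X))
    (hIm : ∀ A, p A ≠ 0 → Finset.univ.image A = ImA)
    (αA βA : ℝ) (hα : 0 ≤ αA) (hβ : 0 ≤ βA)
    (hhash : ∀ T T' : Finset (Fin n → X),
      ∑ u ∈ T, ∑ u' ∈ T', (∑ A, if A u = A u' then p A else 0)
        ≤ ((T ∩ T').card : ℝ)
          + (T.card : ℝ) * (T'.card : ℝ) * αA / (ImA.card : ℝ)
          + (min T.card T'.card : ℕ) * βA)
    (μ : X → ℝ) (hμ0 : ∀ a, 0 ≤ μ a) (hμ1 : ∑ a, μ a = 1)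
    (g : ((Fin n → X) → (Fin lA → X)) → (Fin lA → X) → (Fin n → X))
    (hg : ∀ A c (x' : Fin n → X), A x' = c →
      A (g A c) = c ∧ ent2 (empDist n (g A c)) ≤ ent2 (empDist n x')) :
    ∑ A, p A * ∑ x : Fin n → X,
        (∏ i, μ (x i)) * (if g A (A x) ≠ x then (1 : ℝ) else 0)
      ≤ max (αA * (Fintype.card X : ℝ) ^ lA / (ImA.card : ℝ)) 1 *
          (2 : ℝ) ^ (-(n : ℝ) *
            (sInf {v | ∃ x : Fin n → X,
                v = kl2 (empDist n x) μ +
                  max ((lA : ℝ) * Real.logb 2 (Fintype.card X) / n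
                        - ent2 (empDist n x)) 0}
              - 2 * ((Fintype.card X : ℝ) * Real.logb 2 (n + 1) / n)))
        + βA := by
  classical
  set R : ℝ := (lA : ℝ) * Real.logb 2 (Fintype.card X) / n with hRdef
  set lam : ℝ := (Fintype.card X : ℝ) * Real.logb 2 (n + 1) / n with hlamdef
  set F : ℝ := sInf {v | ∃ x : Fin n → X,
      v = kl2 (empDist n x) μ + max (R - ent2 (empDist n x)) 0} with hFdef
  set M : ℝ := max (αA * (Fintype.card X : ℝ) ^ lA / (ImA.card : ℝ)) 1 with hMdef
  have hnR : (n:ℝ) ≠ 0 := by exact_mod_cast hn.ne'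
  -- X is nonempty
  have hXne : Nonempty X := by
    by_contra h
    rw [not_nonempty_iff] at h
    rw [Finset.univ_eq_empty, Finset.sum_empty] at hμ1
    norm_num at hμ1
  obtain ⟨a0⟩ := hXne
  have hXpos : 0 < Fintype.card X := Fintype.card_pos_iff.2 ⟨a0⟩
  -- ImA is nonempty
  have hImpos : (0:ℝ) < (ImA.card : ℝ) := by
    have hA0 : ∃ A, p A ≠ 0 := by
      by_contra h
      push_neg at h
      rw [Finset.sum_eq_zero (fun A _ => h A)] at hp1
      norm_num at hp1
    obtain ⟨A0, hA0⟩ := hA0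
    have : ImA.Nonempty := by
      rw [← hIm A0 hA0]
      exact ⟨A0 (fun _ => a0), Finset.mem_image.2 ⟨fun _ => a0, Finset.mem_univ _, rfl⟩⟩
    exact_mod_cast Finset.card_pos.2 this
  -- basic exponent facts
  have hlam0 : 0 ≤ lam := by
    rw [hlamdef]
    have h1 : 0 ≤ Real.logb 2 ((n:ℝ) + 1) :=
      Real.logb_nonneg one_lt_two (by norm_num)
    positivity
  have h2R : (2:ℝ) ^ ((n:ℝ) * R) = (Fintype.card X : ℝ) ^ lA := by
    rw [hRdef]
    have : (n:ℝ) * ((lA : ℝ) * Real.logb 2 (Fintype.card X) / n)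
        = Real.logb 2 (Fintype.card X) * lA := by field_simp
    rw [this, Real.rpow_mul_natCast (by norm_num),
      Real.rpow_logb two_pos (by norm_num) (by exact_mod_cast hXpos)]
  have h2lam : (2:ℝ) ^ ((n:ℝ) * lam) = ((n:ℝ)+1) ^ (Fintype.card X) := by
    rw [hlamdef]
    have : (n:ℝ) * ((Fintype.card X : ℝ) * Real.logb 2 ((n:ℝ) + 1) / n)
        = Real.logb 2 ((n:ℝ)+1) * (Fintype.card X) := by field_simp
    rw [this, Real.rpow_mul_natCast (by norm_num),
      Real.rpow_logb two_pos (by norm_num) (by positivity)]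
  have hM1 : (1:ℝ) ≤ M := le_max_right _ _
  -- bounded below for sInf
  have hbdd : BddBelow {v : ℝ | ∃ x : Fin n → X,
      v = kl2 (empDist n x) μ + max (R - ent2 (empDist n x)) 0} := by
    have hset : {v : ℝ | ∃ x : Fin n → X,
        v = kl2 (empDist n x) μ + max (R - ent2 (empDist n x)) 0}
        = Set.range (fun x : Fin n → X =>
            kl2 (empDist n x) μ + max (R - ent2 (empDist n x)) 0) := by
      ext v
      simp [Set.range, eq_comm]
    rw [hset]
    exact (Set.finite_range _).bddBelow
  have hFle : ∀ x : Fin n → X,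
      F ≤ kl2 (empDist n x) μ + max (R - ent2 (empDist n x)) 0 :=
    fun x => csInf_le hbdd ⟨x, rfl⟩
  -- weights
  have hw0 : ∀ x : Fin n → X, 0 ≤ ∏ i, μ (x i) :=
    fun x => Finset.prod_nonneg fun i _ => hμ0 _
  have hwsum : ∑ x : Fin n → X, ∏ i, μ (x i) = 1 := by
    have h := Finset.prod_univ_sum (fun _ : Fin n => (Finset.univ : Finset X))
      (fun _ a => μ a)
    rw [Fintype.piFinset_univ, hμ1, Finset.prod_const, one_pow] at h
    exact h.symm
  -- the competitor set
  set T : (Fin n → X) → Finset (Fin n → X) := fun x =>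
    Finset.univ.filter (fun x' => x' ≠ x ∧ ent2 (empDist n x') ≤ ent2 (empDist n x))
    with hTdef
  -- Step 2 : per-x ensemble error bound
  have hstep2 : ∀ x : Fin n → X,
      ∑ A, p A * (if g A (A x) ≠ x then (1:ℝ) else 0)
        ≤ min (((T x).card : ℝ) * αA / (ImA.card : ℝ)) 1 + βA := by
    intro x
    have he1 : ∑ A, p A * (if g A (A x) ≠ x then (1:ℝ) else 0) ≤ 1 := by
      calc ∑ A, p A * (if g A (A x) ≠ x then (1:ℝ) else 0)
          ≤ ∑ A, p A := Finset.sum_le_sum (fun A _ =>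
            mul_le_of_le_one_right (hp0 A) (by split <;> norm_num))
        _ = 1 := hp1
    have he2 : ∑ A, p A * (if g A (A x) ≠ x then (1:ℝ) else 0)
        ≤ ((T x).card : ℝ) * αA / (ImA.card : ℝ) + βA := by
      have hA : ∀ A, p A * (if g A (A x) ≠ x then (1:ℝ) else 0)
          ≤ ∑ x' ∈ T x, (if A x = A x' then p A else 0) := by
        intro A
        by_cases hgx : g A (A x) = x
        · simp only [hgx, ne_eq, not_true_eq_false, if_false, mul_zero]
          exact Finset.sum_nonneg fun x' _ => by
            by_cases h : A x = A x' <;> simp [h, hp0 A]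
        · rw [if_pos hgx, mul_one]
          obtain ⟨hAy, hey⟩ := hg A (A x) x rfl
          have hyT : g A (A x) ∈ T x := by
            rw [hTdef]
            simp only [Finset.mem_filter, Finset.mem_univ, true_and]
            exact ⟨hgx, hey⟩
          calc p A = (if A x = A (g A (A x)) then p A else 0) := by
                rw [if_pos hAy.symm]
            _ ≤ ∑ x' ∈ T x, (if A x = A x' then p A else 0) :=
              Finset.single_le_sum (f := fun x' => if A x = A x' then p A else 0)
                (fun x' _ => by by_cases h : A x = A x' <;> simp [h, hp0 A]) hyT
      have hhash' := hhash {x} (T x)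
      rw [Finset.sum_singleton] at hhash'
      have hxT : x ∉ T x := by
        rw [hTdef]
        simp
      rw [Finset.singleton_inter_of_notMem hxT] at hhash'
      simp only [Finset.card_empty, Finset.card_singleton, Nat.cast_zero, Nat.cast_one,
        one_mul, zero_add] at hhash'
      have hmin : ((min 1 (T x).card : ℕ) : ℝ) * βA ≤ βA := by
        have h1 : (min 1 (T x).card : ℕ) ≤ 1 := min_le_left _ _
        have h2 : ((min 1 (T x).card : ℕ) : ℝ) ≤ 1 := by exact_mod_cast h1
        nlinarith
      calc ∑ A, p A * (if g A (A x) ≠ x then (1:ℝ) else 0)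
          ≤ ∑ A, ∑ x' ∈ T x, (if A x = A x' then p A else 0) :=
            Finset.sum_le_sum (fun A _ => hA A)
        _ = ∑ x' ∈ T x, ∑ A, (if A x = A x' then p A else 0) := Finset.sum_comm
        _ ≤ ((T x).card : ℝ) * αA / (ImA.card : ℝ)
            + ((min 1 (T x).card : ℕ) : ℝ) * βA := hhash'
        _ ≤ ((T x).card : ℝ) * αA / (ImA.card : ℝ) + βA := by linarith
    rcases le_total (((T x).card : ℝ) * αA / (ImA.card : ℝ)) 1 with hc | hc
    · rw [min_eq_left hc]; exact he2
    · rw [min_eq_right hc]; linarith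
  -- Step 3 : cardinality of T x
  have hTle : ∀ x : Fin n → X, ((T x).card : ℝ)
      ≤ (2:ℝ) ^ ((n:ℝ) * lam) * (2:ℝ) ^ ((n:ℝ) * ent2 (empDist n x)) := by
    intro x
    have hsub : T x ⊆ Finset.univ.filter
        (fun x' : Fin n → X => ent2 (empDist n x') ≤ ent2 (empDist n x)) := by
      intro y hy
      rw [hTdef] at hy
      rw [Finset.mem_filter] at hy ⊢
      exact ⟨hy.1, hy.2.2⟩
    calc ((T x).card : ℝ)
        ≤ ((Finset.univ.filter (fun x' : Fin n → X =>
            ent2 (empDist n x') ≤ ent2 (empDist n x))).card : ℝ) := by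
          exact_mod_cast Finset.card_le_card hsub
      _ ≤ ((n:ℝ)+1) ^ (Fintype.card X) * (2:ℝ) ^ ((n:ℝ) * ent2 (empDist n x)) :=
          card_entLE hn _
      _ = (2:ℝ) ^ ((n:ℝ) * lam) * (2:ℝ) ^ ((n:ℝ) * ent2 (empDist n x)) := by
          rw [h2lam]
  have hstep3 : ∀ x : Fin n → X,
      min (((T x).card : ℝ) * αA / (ImA.card : ℝ)) 1
        ≤ M * (2:ℝ) ^ (-(n:ℝ) * (max (R - ent2 (empDist n x)) 0 - lam)) := by
    intro x
    rcases le_total (ent2 (empDist n x)) R with hc | hc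
    · have hmax : max (R - ent2 (empDist n x)) 0 = R - ent2 (empDist n x) :=
        max_eq_left (by linarith)
      rw [hmax]
      have hexp : (Fintype.card X : ℝ) ^ lA
          * (2:ℝ) ^ (-(n:ℝ) * (R - ent2 (empDist n x) - lam))
          = (2:ℝ) ^ ((n:ℝ) * lam) * (2:ℝ) ^ ((n:ℝ) * ent2 (empDist n x)) := by
        rw [← h2R, ← Real.rpow_add two_pos, ← Real.rpow_add two_pos]
        congr 1
        ring
      calc min (((T x).card : ℝ) * αA / (ImA.card : ℝ)) 1
          ≤ ((T x).card : ℝ) * αA / (ImA.card : ℝ) := min_le_left _ _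
        _ ≤ ((2:ℝ) ^ ((n:ℝ) * lam) * (2:ℝ) ^ ((n:ℝ) * ent2 (empDist n x)))
              * αA / (ImA.card : ℝ) :=
            (div_le_div_iff_of_pos_right hImpos).2
              (mul_le_mul_of_nonneg_right (hTle x) hα)
        _ = (αA * (Fintype.card X : ℝ) ^ lA / (ImA.card : ℝ))
              * (2:ℝ) ^ (-(n:ℝ) * (R - ent2 (empDist n x) - lam)) := by
            rw [← hexp]; ring
        _ ≤ M * (2:ℝ) ^ (-(n:ℝ) * (R - ent2 (empDist n x) - lam)) := by
            apply mul_le_mul_of_nonneg_right (le_max_left _ _)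
              (Real.rpow_nonneg (by norm_num) _)
    · have hmax : max (R - ent2 (empDist n x)) 0 = 0 := max_eq_right (by linarith)
      rw [hmax]
      have hexp : -(n:ℝ) * (0 - lam) = (n:ℝ) * lam := by ring
      rw [hexp]
      have h2 : (1:ℝ) ≤ (2:ℝ) ^ ((n:ℝ) * lam) :=
        Real.one_le_rpow one_le_two (by positivity)
      calc min (((T x).card : ℝ) * αA / (ImA.card : ℝ)) 1 ≤ 1 := min_le_right _ _
        _ ≤ M * (2:ℝ) ^ ((n:ℝ) * lam) := by nlinarith
  -- per-x combined bound
  have hxbound : ∀ x : Fin n → X,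
      (∏ i, μ (x i)) * min (((T x).card : ℝ) * αA / (ImA.card : ℝ)) 1
        ≤ M * (2:ℝ) ^ ((n:ℝ) * lam) * (2:ℝ) ^ (-(n:ℝ) * F)
            * (2:ℝ) ^ (-(n:ℝ) * ent2 (empDist n x)) := by
    intro x
    have h1 := prod_mu_le hn hμ0 x
    have h2 := hstep3 x
    have h3 : (0:ℝ) ≤ min (((T x).card : ℝ) * αA / (ImA.card : ℝ)) 1 :=
      le_min (div_nonneg (mul_nonneg (Nat.cast_nonneg _) hα) (Nat.cast_nonneg _))
        zero_le_one
    have hexp : (2:ℝ) ^ (-(n:ℝ) * (kl2 (empDist n x) μ + ent2 (empDist n x)))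
          * (2:ℝ) ^ (-(n:ℝ) * (max (R - ent2 (empDist n x)) 0 - lam))
        = (2:ℝ) ^ ((n:ℝ) * lam)
            * (2:ℝ) ^ (-(n:ℝ) * (kl2 (empDist n x) μ + max (R - ent2 (empDist n x)) 0))
            * (2:ℝ) ^ (-(n:ℝ) * ent2 (empDist n x)) := by
      rw [← Real.rpow_add two_pos, ← Real.rpow_add two_pos, ← Real.rpow_add two_pos]
      congr 1
      ring
    calc (∏ i, μ (x i)) * min (((T x).card : ℝ) * αA / (ImA.card : ℝ)) 1
        ≤ (2:ℝ) ^ (-(n:ℝ) * (kl2 (empDist n x) μ + ent2 (empDist n x)))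
            * (M * (2:ℝ) ^ (-(n:ℝ) * (max (R - ent2 (empDist n x)) 0 - lam))) :=
          mul_le_mul h1 h2 h3 (Real.rpow_nonneg (by norm_num) _)
      _ = M * ((2:ℝ) ^ ((n:ℝ) * lam)
            * (2:ℝ) ^ (-(n:ℝ) * (kl2 (empDist n x) μ + max (R - ent2 (empDist n x)) 0))
            * (2:ℝ) ^ (-(n:ℝ) * ent2 (empDist n x))) := by
          rw [← hexp]; ring
      _ ≤ M * ((2:ℝ) ^ ((n:ℝ) * lam) * (2:ℝ) ^ (-(n:ℝ) * F)
            * (2:ℝ) ^ (-(n:ℝ) * ent2 (empDist n x))) := by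
          have hFx := hFle x
          have hexp2 : -(n:ℝ) * (kl2 (empDist n x) μ + max (R - ent2 (empDist n x)) 0)
              ≤ -(n:ℝ) * F := by nlinarith [Nat.cast_nonneg (α := ℝ) n]
          have := Real.rpow_le_rpow_of_exponent_le one_le_two hexp2
          have hMpos : (0:ℝ) ≤ M := by linarith
          have p1 : (0:ℝ) ≤ (2:ℝ) ^ ((n:ℝ) * lam) := Real.rpow_nonneg (by norm_num) _
          have p2 : (0:ℝ) ≤ (2:ℝ) ^ (-(n:ℝ) * ent2 (empDist n x)) :=
            Real.rpow_nonneg (by norm_num) _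
          apply mul_le_mul_of_nonneg_left _ hMpos
          apply mul_le_mul_of_nonneg_right _ p2
          exact mul_le_mul_of_nonneg_left this p1
      _ = M * (2:ℝ) ^ ((n:ℝ) * lam) * (2:ℝ) ^ (-(n:ℝ) * F)
            * (2:ℝ) ^ (-(n:ℝ) * ent2 (empDist n x)) := by ring
  -- final exponent identity
  have hfinal : M * (2:ℝ) ^ ((n:ℝ) * lam) * (2:ℝ) ^ (-(n:ℝ) * F)
        * (2:ℝ) ^ ((n:ℝ) * lam)
      = M * (2:ℝ) ^ (-(n:ℝ) * (F - 2 * lam)) := by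
    rw [mul_assoc, mul_assoc, ← Real.rpow_add two_pos, ← Real.rpow_add two_pos]
    congr 2
    ring
  -- assemble
  calc ∑ A, p A * ∑ x : Fin n → X,
        (∏ i, μ (x i)) * (if g A (A x) ≠ x then (1 : ℝ) else 0)
      = ∑ x : Fin n → X, (∏ i, μ (x i))
          * ∑ A, p A * (if g A (A x) ≠ x then (1:ℝ) else 0) := by
        simp_rw [Finset.mul_sum]
        rw [Finset.sum_comm]
        refine Finset.sum_congr rfl fun x _ => Finset.sum_congr rfl fun A _ => by ring
    _ ≤ ∑ x : Fin n → X, (∏ i, μ (x i))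
          * (min (((T x).card : ℝ) * αA / (ImA.card : ℝ)) 1 + βA) := by
        refine Finset.sum_le_sum fun x _ => ?_
        exact mul_le_mul_of_nonneg_left (hstep2 x) (hw0 x)
    _ = (∑ x : Fin n → X, (∏ i, μ (x i))
          * min (((T x).card : ℝ) * αA / (ImA.card : ℝ)) 1)
        + (∑ x : Fin n → X, ∏ i, μ (x i)) * βA := by
        rw [Finset.sum_mul, ← Finset.sum_add_distrib]
        exact Finset.sum_congr rfl fun x _ => by ring
    _ ≤ (∑ x : Fin n → X, M * (2:ℝ) ^ ((n:ℝ) * lam) * (2:ℝ) ^ (-(n:ℝ) * F)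
            * (2:ℝ) ^ (-(n:ℝ) * ent2 (empDist n x))) + 1 * βA := by
        rw [hwsum]
        exact add_le_add (Finset.sum_le_sum fun x _ => hxbound x) le_rfl
    _ ≤ M * (2:ℝ) ^ ((n:ℝ) * lam) * (2:ℝ) ^ (-(n:ℝ) * F) * (2:ℝ) ^ ((n:ℝ) * lam)
          + βA := by
        rw [one_mul, ← Finset.mul_sum]
        have hc : (0:ℝ) ≤ M * (2:ℝ) ^ ((n:ℝ) * lam) * (2:ℝ) ^ (-(n:ℝ) * F) :=
          mul_nonneg (mul_nonneg (by linarith) (Real.rpow_nonneg (by norm_num) _))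
            (Real.rpow_nonneg (by norm_num) _)
        refine add_le_add (mul_le_mul_of_nonneg_left ?_ hc) le_rfl
        rw [h2lam]
        exact sum_two_pow_neg_ent hn
    _ = M * (2:ℝ) ^ (-(n:ℝ) * (F - 2 * lam)) + βA := by rw [hfinal]
end
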